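/- arXiv:2008.06501 — 4 statements merged into one kernel-verified Lean document; each statement's English description precedes it below -/
import Mathlib

section
/- Let (S,+) be a commutative cancellative semigroup and let (S−S,+) denote its difference group. If A ⊆ S is quasi-central in S, then A is quasi-central in S−S. -/
universe u v

/-- A subset `A` of an additive semigroup `T` is *piecewise syndetic* if there is a finite
nonempty `G ⊆ T` such that for every finite nonempty `F ⊆ T` there is `x ∈ T` with
`F + x ⊆ ⋃_{t ∈ G} (-t + A)`, where `-t + A = {y | t + y ∈ A}`. -/
def AddPiecewiseSyndetic {T : Type u} [Add T] (A : Set T) : Prop :=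
  ∃ G : Finset T, G.Nonempty ∧ ∀ F : Finset T, F.Nonempty →
    ∃ x : T, ∀ f ∈ F, ∃ t ∈ G, t + (f + x) ∈ A

/-- A subset `A` of an additive semigroup `T` is *quasi-central* if there is a downward
directed family `⟨C_i⟩_{i ∈ I}` of subsets of `A` (here `r i j` means `i ≥ j`, `(I,≥)` is
a directed set and `i ≥ j → C_i ⊆ C_j`) such that (1) for each `i ∈ I` and `x ∈ C_i`
there is `j ∈ I` with `C_j ⊆ -x + C_i`, and (2) each `C_i` is piecewise syndetic. -/
def AddQuasiCentral {T : Type u} [Add T] (A : Set T) : Prop :=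
  ∃ (I : Type u) (r : I → I → Prop) (C : I → Set T),
    Nonempty I ∧ (∀ i, r i i) ∧ (∀ i j k, r i j → r j k → r i k) ∧
    (∀ i j, ∃ k, r k i ∧ r k j) ∧ (∀ i j, r i j → C i ⊆ C j) ∧
    (∀ i, C i ⊆ A) ∧
    (∀ i, ∀ x ∈ C i, ∃ j, C j ⊆ {y | x + y ∈ C i}) ∧
    (∀ i, AddPiecewiseSyndetic (C i))

/-!
Every finite subset of `S - S` has a common denominator: a single `b ∈ S` translates all of it
into `S`. Hence a finite `F ⊆ S - S` is met by a piecewise syndetic `B ⊆ S` after the shift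
`b + x`, where `x` serves `F + b ⊆ S`. The family witnessing quasi-centrality is carried over
by taking images, indexed by the image sets themselves since the index type must live in the
universe of `S - S`.
-/

lemma AddHom.exists_add_eq_of_forall_eq_sub {S : Type u} {G : Type v}
    [AddCommSemigroup S] [AddCommGroup G] (f : S →ₙ+ G)
    (hdiff : ∀ g : G, ∃ a b : S, g = f a - f b) (F : Finset G) :
    ∃ b : S, ∀ y ∈ F, ∃ a : S, y + f b = f a := by
  classical
  induction F using Finset.induction with
  | empty =>
    obtain ⟨a, -, -⟩ := hdiff 0
    exact ⟨a, by simp⟩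
  | insert g F _ ih =>
    obtain ⟨b, hb⟩ := ih
    obtain ⟨a₀, b₀, rfl⟩ := hdiff g
    refine ⟨b + b₀, fun y hy => ?_⟩
    rcases Finset.mem_insert.mp hy with rfl | hyF
    · exact ⟨a₀ + b, by rw [map_add, map_add]; abel⟩
    · obtain ⟨a, ha⟩ := hb y hyF
      exact ⟨a + b₀, by rw [map_add, map_add, ← add_assoc, ha]⟩

lemma AddPiecewiseSyndetic.image {S : Type u} {T : Type v} [Add S] [AddSemigroup T]
    (f : S →ₙ+ T) (hshift : ∀ F : Finset T, ∃ b : S, ∀ y ∈ F, ∃ a : S, y + f b = f a)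
    {B : Set S} (hB : AddPiecewiseSyndetic B) : AddPiecewiseSyndetic (f '' B) := by
  classical
  obtain ⟨G₀, hG₀, hB⟩ := hB
  refine ⟨G₀.image f, hG₀.image f, fun F hF => ?_⟩
  obtain ⟨b, hb⟩ := hshift F
  choose a ha using hb
  obtain ⟨x, hx⟩ := hB (F.attach.image fun y : F => a y.1 y.2) (hF.attach.image _)
  refine ⟨f b + f x, fun y hy => ?_⟩
  obtain ⟨t, ht, htB⟩ := hx (a y hy) (Finset.mem_image.mpr ⟨⟨y, hy⟩, Finset.mem_attach _ _, rfl⟩)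
  refine ⟨f t, Finset.mem_image_of_mem f ht, ⟨_, htB, ?_⟩⟩
  rw [map_add, map_add, ← ha y hy, add_assoc]

lemma AddQuasiCentral.image {S : Type u} {T : Type v} [Add S] [Add T] (f : S →ₙ+ T)
    (hf : ∀ B : Set S, AddPiecewiseSyndetic B → AddPiecewiseSyndetic (f '' B))
    {A : Set S} (hA : AddQuasiCentral A) : AddQuasiCentral (f '' A) := by
  obtain ⟨I, r, C, ⟨i₀⟩, -, -, hdir, hmono, hsub, hshift, hps⟩ := hA
  refine ⟨Set.range fun i => f '' C i, fun D E => D.1 ⊆ E.1, Subtype.val, ⟨⟨_, i₀, rfl⟩⟩,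
    fun _ => subset_rfl, fun _ _ _ => Set.Subset.trans, ?_, fun _ _ => id, ?_, ?_, ?_⟩
  · rintro ⟨_, i, rfl⟩ ⟨_, j, rfl⟩
    obtain ⟨k, hki, hkj⟩ := hdir i j
    exact ⟨⟨_, k, rfl⟩, Set.image_mono (hmono _ _ hki), Set.image_mono (hmono _ _ hkj)⟩
  · rintro ⟨_, i, rfl⟩
    exact Set.image_mono (hsub i)
  · rintro ⟨_, i, rfl⟩ _ ⟨s, hs, rfl⟩
    obtain ⟨j, hj⟩ := hshift i s hs
    refine ⟨⟨_, j, rfl⟩, ?_⟩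
    rintro _ ⟨t, ht, rfl⟩
    exact ⟨s + t, hj ht, map_add f s t⟩
  · rintro ⟨_, i, rfl⟩
    exact hf _ (hps i)

theorem addQuasiCentral_image_of_addQuasiCentral_general {S : Type u} {G : Type v}
    [AddCommSemigroup S] [AddCommGroup G]
    (φ : S → G)
    (hhom : ∀ x y : S, φ (x + y) = φ x + φ y)
    (hdiff : ∀ g : G, ∃ a b : S, g = φ a - φ b)
    (A : Set S) (hA : AddQuasiCentral A) : AddQuasiCentral (φ '' A) :=
  let f : S →ₙ+ G := ⟨φ, hhom⟩
  hA.image f fun _ hB => hB.image f (f.exists_add_eq_of_forall_eq_sub hdiff)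

/-- Let `(S,+)` be a commutative cancellative semigroup and let `(G,+)` together with the
injective additive embedding `φ : S → G` be its difference group.  If `A ⊆ S` is
quasi-central in `S`, then `A` is quasi-central in `G = S - S`. -/
theorem addQuasiCentral_image_of_addQuasiCentral {S : Type u} {G : Type v}
    [AddCommSemigroup S] [IsCancelAdd S] [AddCommGroup G]
    (φ : S → G) (hinj : Function.Injective φ)
    (hhom : ∀ x y : S, φ (x + y) = φ x + φ y)
    (hdiff : ∀ g : G, ∃ a b : S, g = φ a - φ b)
    (A : Set S) (hA : AddQuasiCentral A) : AddQuasiCentral (φ '' A) :=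
  addQuasiCentral_image_of_addQuasiCentral_general φ hhom hdiff A hA
end

section
/- Let (S,+) be a commutative cancellative semigroup and let (S−S,+) denote its difference group. If A ⊆ S is central in S, then A is central in S−S. -/
universe u v

/-- A family `𝒜` of subsets of an additive semigroup `T` is *collectionwise piecewise
syndetic* if there exist functions `K` from the finite nonempty subfamilies of `𝒜` to the
finite nonempty subsets of `T`, and `x` from (finite nonempty subfamilies of `𝒜`) ×
(finite nonempty subsets of `T`) to `T`, such that for every finite nonempty `F ⊆ T` and
all finite nonempty subfamilies `ℱ ⊆ ℋ` of `𝒜` one has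
`F + x(ℋ,F) ⊆ ⋃_{t ∈ K(ℱ)} (-t + ⋂ℱ)`. -/
def AddCollectionwisePS {T : Type u} [Add T] (𝒜 : Set (Set T)) : Prop :=
  ∃ (K : {ℱ : Finset (Set T) // ℱ.Nonempty ∧ (↑ℱ : Set (Set T)) ⊆ 𝒜} →
        {B : Finset T // B.Nonempty})
    (x : {ℱ : Finset (Set T) // ℱ.Nonempty ∧ (↑ℱ : Set (Set T)) ⊆ 𝒜} →
        {F : Finset T // F.Nonempty} → T),
    ∀ (F : {F : Finset T // F.Nonempty})
      (ℱ ℋ : {ℱ : Finset (Set T) // ℱ.Nonempty ∧ (↑ℱ : Set (Set T)) ⊆ 𝒜}),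
      ℱ.1 ⊆ ℋ.1 →
      ∀ f ∈ F.1, ∃ t ∈ (K ℱ).1, t + (f + x ℋ F) ∈ ⋂₀ (↑ℱ.1 : Set (Set T))

/-- A subset `A` of an additive semigroup `T` is *central* if there is a downward directed
family `⟨C_i⟩_{i ∈ I}` of subsets of `A` (here `r i j` means `i ≥ j`, `(I,≥)` is a
directed set and `i ≥ j → C_i ⊆ C_j`) such that (1) for each `i ∈ I` and `x ∈ C_i` there
is `j ∈ I` with `C_j ⊆ -x + C_i`, and (2) the family `{C_i : i ∈ I}` is collectionwise
piecewise syndetic in `T`. -/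
def AddCentral {T : Type u} [Add T] (A : Set T) : Prop :=
  ∃ (I : Type u) (r : I → I → Prop) (C : I → Set T),
    Nonempty I ∧ (∀ i, r i i) ∧ (∀ i j k, r i j → r j k → r i k) ∧
    (∀ i j, ∃ k, r k i ∧ r k j) ∧ (∀ i j, r i j → C i ⊆ C j) ∧
    (∀ i, C i ⊆ A) ∧
    (∀ i, ∀ x ∈ C i, ∃ j, C j ⊆ {y | x + y ∈ C i}) ∧
    AddCollectionwisePS (Set.range C)

/-! The directed family `⟨C_i⟩` witnessing centrality of `A` in `S` is pushed forward to
`⟨φ '' C_i⟩`. For piecewise syndeticity, every finite `F ⊆ S - S` has a translate `F + φ c`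
inside `φ '' S` (add the subtrahend of each new element of `F` to `c`); the witnesses in `S`
applied to that translate work in `S - S` once `c` is absorbed into the shift `x(ℋ, F)`. -/

variable {S : Type u} {G : Type v}

theorem exists_forall_add_mem_range_of_forall_eq_sub [Add S] [AddCommGroup G] (φ : S →ₙ+ G)
    (hdiff : ∀ g : G, ∃ a b : S, g = φ a - φ b) (F : Finset G) :
    ∃ c : S, ∀ f ∈ F, f + φ c ∈ Set.range φ := by
  classical
  induction F using Finset.induction with
  | empty =>
    obtain ⟨a, -, -⟩ := hdiff 0
    exact ⟨a, by simp⟩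
  | insert f F _ ih =>
    obtain ⟨c, hc⟩ := ih
    obtain ⟨a, b, rfl⟩ := hdiff f
    refine ⟨b + c, Finset.forall_mem_insert _ _ _ |>.mpr ⟨⟨a + c, ?_⟩, fun g hg => ?_⟩⟩
    · rw [map_add, map_add]
      abel
    · obtain ⟨s, hs⟩ := hc g hg
      exact ⟨s + b, by rw [map_add, map_add, hs]; abel⟩

section Image

variable [Add S] [AddSemigroup G]

theorem AddCollectionwisePS.image {𝒜 : Set (Set S)} (h𝒜 : AddCollectionwisePS 𝒜)
    (φ : S →ₙ+ G) (hφ : ∀ F : Finset G, ∃ c : S, ∀ f ∈ F, f + φ c ∈ Set.range φ) :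
    AddCollectionwisePS ((φ '' ·) '' 𝒜) := by
  classical
  obtain ⟨K, x, hK⟩ := h𝒜
  choose c hc using hφ
  choose s hs using hc
  let pull : Set G → Set S := Function.invFunOn (φ '' ·) 𝒜
  let pullFamily (ℱ : {ℱ : Finset (Set G) // ℱ.Nonempty ∧ ↑ℱ ⊆ (φ '' ·) '' 𝒜}) :
      {ℱ : Finset (Set S) // ℱ.Nonempty ∧ ↑ℱ ⊆ 𝒜} :=
    ⟨ℱ.1.image pull, ℱ.2.1.image pull, by
      simp only [Finset.coe_image, Set.image_subset_iff]
      exact fun B hB => Function.invFunOn_mem (ℱ.2.2 hB)⟩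
  let pullFinset (F : {F : Finset G // F.Nonempty}) : {F : Finset S // F.Nonempty} :=
    ⟨F.1.attach.image fun f => s F.1 f.1 f.2, F.2.attach.image _⟩
  refine ⟨fun ℱ => ⟨(K (pullFamily ℱ)).1.image φ, (K (pullFamily ℱ)).2.image φ⟩,
    fun ℋ F => φ (c F.1) + φ (x (pullFamily ℋ) (pullFinset F)), ?_⟩
  intro F ℱ ℋ hℱℋ f hf
  obtain ⟨t, ht, hmem⟩ := hK (pullFinset F) (pullFamily ℱ) (pullFamily ℋ)
    (Finset.image_subset_image hℱℋ) (s F.1 f hf)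
    (Finset.mem_image_of_mem _ (Finset.mem_attach _ ⟨f, hf⟩))
  refine ⟨φ t, Finset.mem_image_of_mem φ ht, ?_⟩
  have hsum : φ t + (f + (φ (c F.1) + φ (x (pullFamily ℋ) (pullFinset F)))) =
      φ (t + (s F.1 f hf + x (pullFamily ℋ) (pullFinset F))) := by
    rw [map_add, map_add, hs, add_assoc]
  rw [hsum]
  intro B hB
  rw [← Function.invFunOn_eq (ℱ.2.2 hB)]
  exact Set.mem_image_of_mem φ (hmem _ (Finset.mem_image_of_mem pull hB))

theorem AddCentral.image {A : Set S} (hA : AddCentral A) (φ : S →ₙ+ G)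
    (hφ : ∀ F : Finset G, ∃ c : S, ∀ f ∈ F, f + φ c ∈ Set.range φ) :
    AddCentral (φ '' A) := by
  obtain ⟨I, r, C, ⟨i₀⟩, -, -, hdir, hmono, hCA, hshift, hC⟩ := hA
  -- The new index type must live in `G`'s universe, so index by the image sets themselves.
  refine ⟨Set.range fun i => φ '' C i, fun B B' => B.1 ⊆ B'.1, Subtype.val, ⟨⟨_, i₀, rfl⟩⟩,
    fun _ => subset_rfl, fun _ _ _ => Set.Subset.trans, ?_, fun _ _ => id, ?_, ?_, ?_⟩
  · rintro ⟨_, i, rfl⟩ ⟨_, j, rfl⟩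
    obtain ⟨k, hki, hkj⟩ := hdir i j
    exact ⟨⟨_, k, rfl⟩, Set.image_mono (hmono _ _ hki), Set.image_mono (hmono _ _ hkj)⟩
  · rintro ⟨_, i, rfl⟩
    exact Set.image_mono (hCA i)
  · rintro ⟨_, i, rfl⟩ _ ⟨y, hy, rfl⟩
    obtain ⟨j, hj⟩ := hshift i y hy
    refine ⟨⟨_, j, rfl⟩, ?_⟩
    rintro _ ⟨z, hz, rfl⟩
    exact ⟨y + z, hj hz, map_add φ y z⟩
  · rw [Subtype.range_val, Set.range_comp' (φ '' ·) C]
    exact hC.image φ hφ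

end Image

theorem addCentral_image_of_addCentral_general {S : Type u} {G : Type v}
    [AddCommSemigroup S] [AddCommGroup G]
    (φ : S → G)
    (hhom : ∀ x y : S, φ (x + y) = φ x + φ y)
    (hdiff : ∀ g : G, ∃ a b : S, g = φ a - φ b)
    (A : Set S) (hA : AddCentral A) : AddCentral (φ '' A) :=
  hA.image ⟨φ, hhom⟩ (exists_forall_add_mem_range_of_forall_eq_sub ⟨φ, hhom⟩ hdiff)

/-- Let `(S,+)` be a commutative cancellative semigroup and let `(G,+)` together with the
injective additive embedding `φ : S → G` be its difference group.  If `A ⊆ S` is central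
in `S`, then `A` is central in `G = S - S`. -/
theorem addCentral_image_of_addCentral {S : Type u} {G : Type v}
    [AddCommSemigroup S] [IsCancelAdd S] [AddCommGroup G]
    (φ : S → G) (hinj : Function.Injective φ)
    (hhom : ∀ x y : S, φ (x + y) = φ x + φ y)
    (hdiff : ∀ g : G, ∃ a b : S, g = φ a - φ b)
    (A : Set S) (hA : AddCentral A) : AddCentral (φ '' A) :=
  addCentral_image_of_addCentral_general φ hhom hdiff A hA
end

section
/- Let (S,+) be a commutative cancellative semigroup and let (S−S,+) denote its difference group. If A ⊆ S is a C-set in S, then A is a C-set in S−S. -/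
universe u v

/-- Left fold of addition: `addList x [y₁,…,yₙ] = x + y₁ + ⋯ + yₙ`. -/
def addList {T : Type u} [Add T] : T → List T → T
  | x, [] => x
  | x, y :: l => addList (x + y) l

/-- A subset `A` of a commutative additive semigroup `T` is a *J-set* if for every finite
nonempty set `F` of sequences `f : ℕ → T` there exist `a ∈ T` and a finite nonempty
`H ⊆ ℕ` (encoded as a strictly increasing list `t₀ :: ts`) such that
`a + Σ_{t ∈ H} f(t) ∈ A` for every `f ∈ F`. -/
def AddJSet {T : Type u} [Add T] (A : Set T) : Prop :=
  ∀ F : Finset (ℕ → T), F.Nonempty →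
    ∃ (a : T) (t₀ : ℕ) (ts : List ℕ), (t₀ :: ts).Chain' (· < ·) ∧
      ∀ f ∈ F, a + addList (f t₀) (ts.map f) ∈ A

/-- A subset `A` of a commutative additive semigroup `T` is a *C-set* if there is a
downward directed family `⟨C_i⟩_{i ∈ I}` of subsets of `A` (here `r i j` means `i ≥ j`,
`(I,≥)` is a directed set and `i ≥ j → C_i ⊆ C_j`) such that (1) for each `i ∈ I` and
`x ∈ C_i` there is `j ∈ I` with `C_j ⊆ -x + C_i`, and (2) for each finite nonempty
`ℱ ⊆ I`, the intersection `⋂_{i ∈ ℱ} C_i` is a J-set in `T`. -/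
def AddCSet {T : Type u} [Add T] (A : Set T) : Prop :=
  ∃ (I : Type u) (r : I → I → Prop) (C : I → Set T),
    Nonempty I ∧ (∀ i, r i i) ∧ (∀ i j k, r i j → r j k → r i k) ∧
    (∀ i j, ∃ k, r k i ∧ r k j) ∧ (∀ i j, r i j → C i ⊆ C j) ∧
    (∀ i, C i ⊆ A) ∧
    (∀ i, ∀ x ∈ C i, ∃ j, C j ⊆ {y | x + y ∈ C i}) ∧
    (∀ ℱ : Finset I, ℱ.Nonempty → AddJSet (⋂ i ∈ ℱ, C i))

/-!
Finitely many elements of `S − S` can be moved into `S` by adding one common element of `S`.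
Hence, given finitely many sequences in `S − S`, adding a common sequence `b` moves all of them
into `S`; a J-set witness `(a, H)` for the moved sequences becomes the witness
`(a + Σ_{t ∈ H} b t, H)` for the original ones, so images of J-sets are J-sets. A C-set family
`⟨C_i⟩` is then simply pushed forward to `⟨φ '' C_i⟩`.
-/

theorem addList_add_map {T : Type*} [AddCommSemigroup T] (l : List ℕ) (f g : ℕ → T) (x y : T) :
    addList (x + y) (l.map fun t => f t + g t) = addList x (l.map f) + addList y (l.map g) := by
  induction l generalizing x y with
  | nil => rfl
  | cons t l ih =>
    simp only [List.map_cons, addList]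
    rw [← ih, add_add_add_comm]

theorem AddHom.map_addList {S G : Type*} [Add S] [Add G] (φ : S →ₙ+ G) (x : S) (l : List S) :
    φ (addList x l) = addList (φ x) (l.map φ) := by
  induction l generalizing x with
  | nil => rfl
  | cons y l ih => simp [addList, ih]

theorem AddJSet.mono {T : Type u} [Add T] {A B : Set T} (h : A ⊆ B) (hA : AddJSet A) :
    AddJSet B := by
  intro F hF
  obtain ⟨a, t₀, ts, hchain, hmem⟩ := hA F hF
  exact ⟨a, t₀, ts, hchain, fun f hf => h (hmem f hf)⟩

theorem AddHom.exists_common_shift {S G ι : Type*} [AddCommSemigroup S] [AddCommGroup G]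
    (φ : S →ₙ+ G) (hdiff : ∀ g : G, ∃ a b : S, g = φ a - φ b) (F : Finset ι) (g : ι → G) :
    ∃ (b : S) (c : ι → S), ∀ i ∈ F, φ (c i) = g i + φ b := by
  classical
  induction F using Finset.induction with
  | empty =>
    obtain ⟨b, -⟩ := hdiff 0
    exact ⟨b, fun _ => b, by simp⟩
  | insert i F _ ih =>
    obtain ⟨b, c, hc⟩ := ih
    obtain ⟨a, d, hi⟩ := hdiff (g i)
    refine ⟨b + d, fun j => if j = i then a + b else c j + d, ?_⟩
    intro j hj
    by_cases hji : j = i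
    · subst hji
      simp only [if_pos, map_add, hi]
      abel
    · simp only [hji, if_false, map_add, hc j (Finset.mem_of_mem_insert_of_ne hj hji)]
      abel

theorem AddJSet.image {S : Type u} {G : Type v} [AddCommSemigroup S] [AddCommGroup G]
    (φ : S →ₙ+ G) (hdiff : ∀ g : G, ∃ a b : S, g = φ a - φ b) {D : Set S} (hD : AddJSet D) :
    AddJSet (φ '' D) := by
  classical
  intro F hF
  choose b c hc using fun n => φ.exists_common_shift hdiff F (fun f => f n)
  let lift : (ℕ → G) → ℕ → S := fun f t => c t f
  obtain ⟨a, t₀, ts, hchain, hmem⟩ := hD (F.image lift) (hF.image lift)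
  refine ⟨φ a + addList (φ (b t₀)) (ts.map fun t => φ (b t)), t₀, ts, hchain, fun f hf => ?_⟩
  refine ⟨_, hmem (lift f) (Finset.mem_image_of_mem lift hf), ?_⟩
  have hlift : ∀ t, φ (lift f t) = f t + φ (b t) := fun t => hc t f hf
  rw [map_add, φ.map_addList, List.map_map, Function.comp_def, hlift,
    List.map_congr_left fun t _ => hlift t, addList_add_map]
  abel

theorem AddCSet.image_of_addJSet_image {S : Type u} {G : Type v} [Add S] [Add G]
    (φ : S →ₙ+ G) (hJ : ∀ D : Set S, AddJSet D → AddJSet (φ '' D)) {A : Set S}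
    (hA : AddCSet A) : AddCSet (φ '' A) := by
  classical
  obtain ⟨I, r, C, ⟨i₀⟩, -, -, hdir, hmono, hsub, hshift, hinter⟩ := hA
  -- Indexing by the image sets themselves keeps the index type in the universe of `G`.
  let E : I → Set G := fun i => φ '' C i
  let idx : Set.range E → I := Set.rangeSplitting E
  have hidx : ∀ B : Set.range E, (B : Set G) = φ '' C (idx B) :=
    fun B => (Set.apply_rangeSplitting E B).symm
  refine ⟨Set.range E, fun B B' => (B : Set G) ⊆ B', (↑), ⟨⟨E i₀, i₀, rfl⟩⟩,
    fun _ => subset_rfl, fun _ _ _ => Set.Subset.trans, ?_, fun _ _ => id, ?_, ?_, ?_⟩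
  · rintro ⟨_, i, rfl⟩ ⟨_, j, rfl⟩
    obtain ⟨k, hki, hkj⟩ := hdir i j
    exact ⟨⟨E k, k, rfl⟩, Set.image_mono (hmono k i hki), Set.image_mono (hmono k j hkj)⟩
  · rintro ⟨_, i, rfl⟩
    exact Set.image_mono (hsub i)
  · rintro ⟨_, i, rfl⟩ _ ⟨s, hs, rfl⟩
    obtain ⟨j, hj⟩ := hshift i s hs
    refine ⟨⟨E j, j, rfl⟩, ?_⟩
    rintro _ ⟨t, ht, rfl⟩
    exact ⟨s + t, hj ht, map_add φ s t⟩
  · intro ℱ hℱ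
    refine (hJ _ (hinter (ℱ.image idx) (hℱ.image idx))).mono ?_
    refine (Set.image_iInter₂_subset _ φ).trans ?_
    simp only [Set.subset_def, Set.mem_iInter]
    intro y hy B hB
    rw [hidx B]
    exact hy (idx B) (Finset.mem_image_of_mem idx hB)

theorem addCSet_image_of_addCSet_general {S : Type u} {G : Type v}
    [AddCommSemigroup S] [AddCommGroup G]
    (φ : S → G)
    (hhom : ∀ x y : S, φ (x + y) = φ x + φ y)
    (hdiff : ∀ g : G, ∃ a b : S, g = φ a - φ b)
    (A : Set S) (hA : AddCSet A) : AddCSet (φ '' A) :=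
  let φ' : S →ₙ+ G := ⟨φ, hhom⟩
  hA.image_of_addJSet_image φ' fun _ hD => hD.image φ' hdiff

/-- Let `(S,+)` be a commutative cancellative semigroup and let `(G,+)` together with the
injective additive embedding `φ : S → G` be its difference group.  If `A ⊆ S` is a C-set
in `S`, then `A` is a C-set in `G = S - S`. -/
theorem addCSet_image_of_addCSet {S : Type u} {G : Type v}
    [AddCommSemigroup S] [IsCancelAdd S] [AddCommGroup G]
    (φ : S → G) (hinj : Function.Injective φ)
    (hhom : ∀ x y : S, φ (x + y) = φ x + φ y)
    (hdiff : ∀ g : G, ∃ a b : S, g = φ a - φ b)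
    (A : Set S) (hA : AddCSet A) : AddCSet (φ '' A) :=
  addCSet_image_of_addCSet_general φ hhom hdiff A hA
end

section
/- Let Φ : (S,·) → (T,·) be a semigroup homomorphism such that Φ(S) is piecewise syndetic in T. If A ⊆ S is quasi-central in S, then Φ(A) is quasi-central in T. -/
universe u v

/-- A subset `A` of a semigroup `T` is *piecewise syndetic* if there is a finite nonempty
`G ⊆ T` such that for every finite nonempty `F ⊆ T` there is `x ∈ T` with
`F·x ⊆ ⋃_{t ∈ G} t⁻¹A`, where `t⁻¹A = {y | t·y ∈ A}`. -/
def MulPiecewiseSyndetic {T : Type u} [Mul T] (A : Set T) : Prop :=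
  ∃ G : Finset T, G.Nonempty ∧ ∀ F : Finset T, F.Nonempty →
    ∃ x : T, ∀ f ∈ F, ∃ t ∈ G, t * (f * x) ∈ A

/-- A subset `A` of a semigroup `T` is *quasi-central* if there is a downward directed
family `⟨C_i⟩_{i ∈ I}` of subsets of `A` (here `r i j` means `i ≥ j`, `(I,≥)` is a
directed set and `i ≥ j → C_i ⊆ C_j`) such that (1) for each `i ∈ I` and `x ∈ C_i` there
is `j ∈ I` with `C_j ⊆ x⁻¹C_i`, and (2) each `C_i` is piecewise syndetic in `T`. -/
def MulQuasiCentral {T : Type u} [Mul T] (A : Set T) : Prop :=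
  ∃ (I : Type u) (r : I → I → Prop) (C : I → Set T),
    Nonempty I ∧ (∀ i, r i i) ∧ (∀ i j k, r i j → r j k → r i k) ∧
    (∀ i j, ∃ k, r k i ∧ r k j) ∧ (∀ i j, r i j → C i ⊆ C j) ∧
    (∀ i, C i ⊆ A) ∧
    (∀ i, ∀ x ∈ C i, ∃ j, C j ⊆ {y | x * y ∈ C i}) ∧
    (∀ i, MulPiecewiseSyndetic (C i))

/-! If `G₁` witnesses that `B` is piecewise syndetic and `G₂` that `Φ(S)` is, then
`Φ(G₁)·G₂` witnesses that `Φ(B)` is: given `F`, first translate `F` into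
`⋃_{t ∈ G₂} t⁻¹Φ(S)`, pull the resulting points back to `S`, and translate those into
`⋃_{g ∈ G₁} g⁻¹B`. Quasi-centrality passes to the image family `⟨Φ(C_i)⟩`, which can be
reindexed by the sets `Φ(C_i)` themselves, ordered by inclusion, to land in the universe
of `T`. -/

theorem MulPiecewiseSyndetic.image {S : Type u} {T : Type v} [Semigroup S] [Semigroup T]
    (Φ : S →ₙ* T) (hrange : MulPiecewiseSyndetic (Set.range Φ)) {B : Set S}
    (hB : MulPiecewiseSyndetic B) : MulPiecewiseSyndetic (Φ '' B) := by
  classical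
  obtain ⟨G₁, hG₁, hB⟩ := hB
  obtain ⟨G₂, hG₂, hrange⟩ := hrange
  refine ⟨(G₁ ×ˢ G₂).image fun p => Φ p.1 * p.2, (hG₁.product hG₂).image _, fun F hF => ?_⟩
  obtain ⟨x₂, hx₂⟩ := hrange F hF
  choose t ht s hs using fun f : F => hx₂ f.1 f.2
  obtain ⟨x₁, hx₁⟩ := hB (F.attach.image s) ((Finset.attach_nonempty_iff.mpr hF).image s)
  refine ⟨x₂ * Φ x₁, fun f hf => ?_⟩
  obtain ⟨g, hg, hgB⟩ := hx₁ (s ⟨f, hf⟩) (Finset.mem_image_of_mem s (F.mem_attach _))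
  refine ⟨Φ g * t ⟨f, hf⟩, Finset.mem_image.mpr ⟨(g, _), Finset.mem_product.mpr ⟨hg, ht _⟩, rfl⟩,
    g * (s ⟨f, hf⟩ * x₁), hgB, ?_⟩
  simp only [map_mul, hs, mul_assoc]

theorem mulQuasiCentral_of_directed {T : Type v} [Mul T] {A : Set T} {ι : Sort*}
    [Nonempty ι] (C : ι → Set T) (hdir : ∀ i j, ∃ k, C k ⊆ C i ∧ C k ⊆ C j)
    (hsub : ∀ i, C i ⊆ A) (hshift : ∀ i, ∀ x ∈ C i, ∃ j, C j ⊆ {y | x * y ∈ C i})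
    (hps : ∀ i, MulPiecewiseSyndetic (C i)) : MulQuasiCentral A := by
  refine ⟨Set.range C, fun D E => D.1 ⊆ E.1, Subtype.val, Set.Nonempty.to_subtype
    (Set.range_nonempty C), fun _ => subset_rfl, fun _ _ _ => subset_trans, ?_,
    fun _ _ => id, ?_, ?_, ?_⟩
  · rintro ⟨_, i, rfl⟩ ⟨_, j, rfl⟩
    obtain ⟨k, hki, hkj⟩ := hdir i j
    exact ⟨⟨C k, k, rfl⟩, hki, hkj⟩
  · rintro ⟨_, i, rfl⟩
    exact hsub i
  · rintro ⟨_, i, rfl⟩ x hx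
    obtain ⟨j, hj⟩ := hshift i x hx
    exact ⟨⟨C j, j, rfl⟩, hj⟩
  · rintro ⟨_, i, rfl⟩
    exact hps i

/-- If `Φ : S → T` is a semigroup homomorphism such that `Φ(S)` is piecewise syndetic in
`T`, and `A ⊆ S` is quasi-central in `S`, then `Φ(A)` is quasi-central in `T`. -/
theorem mulQuasiCentral_image_of_mulQuasiCentral {S : Type u} {T : Type v}
    [Semigroup S] [Semigroup T] (Φ : S → T)
    (hΦ : ∀ x y : S, Φ (x * y) = Φ x * Φ y)
    (hrange : MulPiecewiseSyndetic (Set.range Φ))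
    (A : Set S) (hA : MulQuasiCentral A) : MulQuasiCentral (Φ '' A) := by
  obtain ⟨I, _, C, _, -, -, hdir, hmono, hsub, hshift, hps⟩ := hA
  refine mulQuasiCentral_of_directed (fun i => Φ '' C i) (fun i j => ?_)
    (fun i => Set.image_mono (hsub i)) ?_ fun i => .image ⟨Φ, hΦ⟩ hrange (hps i)
  · obtain ⟨k, hki, hkj⟩ := hdir i j
    exact ⟨k, Set.image_mono (hmono _ _ hki), Set.image_mono (hmono _ _ hkj)⟩
  · rintro i _ ⟨x, hx, rfl⟩
    obtain ⟨j, hj⟩ := hshift i x hx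
    refine ⟨j, ?_⟩
    rintro _ ⟨y, hy, rfl⟩
    exact ⟨x * y, hj hy, hΦ x y⟩
end
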